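/- arXiv:1511.03395 — 4 statements merged into one kernel-verified Lean document; each statement's English description precedes it below -/
import Mathlib

section
/- Let ε be a real-valued random variable on a probability space whose cumulative distribution function F : ℝ → ℝ is continuous, monotone nondecreasing, satisfies F(x) + F(−x) = 1 for all x ∈ ℝ, is convex on (−∞, 0] and concave on [0, ∞). Then for every b ∈ ℝ and every x ≥ 0, P((ε − b)² ≤ x) ≤ P(ε² ≤ x). Equivalently, ε² is stochastically dominated by (ε − b)²: P(ε² > x) ≤ P((ε − b)² > x) for all x. -/
open MeasureTheory

/-- Shift inequality for concave functions: increments decrease as the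
interval moves to the right. -/
lemma concave_shift {F : ℝ → ℝ} (hconc : ConcaveOn ℝ (Set.Ici (0 : ℝ)) F)
    {a a' h : ℝ} (ha : 0 ≤ a) (haa' : a ≤ a') (hh : 0 ≤ h) :
    F (a' + h) + F a ≤ F (a + h) + F a' := by
  set d := a' - a with hd
  have hd0 : 0 ≤ d := by simp [hd]; linarith
  rcases eq_or_lt_of_le (add_nonneg hd0 hh) with heq | hpos
  · have hd' : d = 0 := by linarith
    have hh' : h = 0 := by linarith
    have : a' = a := by linarith [hd ▸ hd']
    rw [this, hh']
  · set t := d / (d + h) with ht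
    have ht0 : 0 ≤ t := div_nonneg hd0 (le_of_lt hpos)
    have ht1 : 0 ≤ 1 - t := by
      have : t ≤ 1 := by rw [ht, div_le_one hpos]; linarith
      linarith
    have hmem1 : a ∈ Set.Ici (0 : ℝ) := ha
    have hmem2 : a' + h ∈ Set.Ici (0 : ℝ) := by
      simp only [Set.mem_Ici]; linarith
    have h1 := hconc.2 hmem1 hmem2 ht0 ht1 (by ring)
    have h2 := hconc.2 hmem1 hmem2 ht1 ht0 (by ring)
    rw [smul_eq_mul, smul_eq_mul, smul_eq_mul, smul_eq_mul] at h1 h2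
    have e1 : t * a + (1 - t) * (a' + h) = a + h := by
      rw [ht]; field_simp; ring_nf; rw [hd]; ring
    have e2 : (1 - t) * a + t * (a' + h) = a' := by
      rw [ht]; field_simp; ring_nf; rw [hd]; ring
    rw [e1] at h1
    rw [e2] at h2
    nlinarith [h1, h2]

/-- Key real inequality for nonnegative bias. -/
lemma key_nonneg {F : ℝ → ℝ}
    (hsym : ∀ x : ℝ, F x + F (-x) = 1)
    (hconc : ConcaveOn ℝ (Set.Ici (0 : ℝ)) F)
    {b s : ℝ} (hb : 0 ≤ b) (hs : 0 ≤ s) :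
    F (b + s) - F (b - s) ≤ F s - F (-s) := by
  have hFs := hsym s
  rcases le_total b s with hbs | hbs
  · -- midpoint concavity at s with points s - b, s + b
    have hm1 : s - b ∈ Set.Ici (0 : ℝ) := by simp; linarith
    have hm2 : s + b ∈ Set.Ici (0 : ℝ) := by simp; linarith
    have h := hconc.2 hm1 hm2 (by norm_num : (0:ℝ) ≤ 1/2)
      (by norm_num : (0:ℝ) ≤ 1/2) (by norm_num)
    rw [smul_eq_mul, smul_eq_mul, smul_eq_mul, smul_eq_mul] at h
    have e : (1/2 : ℝ) * (s - b) + (1/2) * (s + b) = s := by ring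
    rw [e] at h
    have hsb : F (b - s) + F (s - b) = 1 := by
      have := hsym (b - s); rwa [show -(b - s) = s - b by ring] at this
    have : F (b + s) = F (s + b) := by ring_nf
    linarith [this, h, hsb, hFs]
  · -- shift then midpoint
    have h0 : F 0 = 1/2 := by have := hsym 0; norm_num at this; linarith
    have hsh := concave_shift hconc (le_refl (0:ℝ)) (by linarith : (0:ℝ) ≤ b - s)
      (by linarith : (0:ℝ) ≤ 2 * s)
    rw [show b - s + 2 * s = b + s by ring, zero_add] at hsh
    have hm1 : (0:ℝ) ∈ Set.Ici (0 : ℝ) := Set.self_mem_Ici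
    have hm2 : 2 * s ∈ Set.Ici (0 : ℝ) := by simp; linarith
    have h := hconc.2 hm1 hm2 (by norm_num : (0:ℝ) ≤ 1/2)
      (by norm_num : (0:ℝ) ≤ 1/2) (by norm_num)
    rw [smul_eq_mul, smul_eq_mul, smul_eq_mul, smul_eq_mul] at h
    have e : (1/2 : ℝ) * 0 + (1/2) * (2 * s) = s := by ring
    rw [e] at h
    linarith [hsh, h, hFs, h0]

/-- Key real inequality: the CDF increment over `[b - s, b + s]` is maximal
at `b = 0`. -/
lemma key_ineq {F : ℝ → ℝ}
    (hsym : ∀ x : ℝ, F x + F (-x) = 1)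
    (hconc : ConcaveOn ℝ (Set.Ici (0 : ℝ)) F)
    (b : ℝ) {s : ℝ} (hs : 0 ≤ s) :
    F (b + s) - F (b - s) ≤ F s - F (-s) := by
  rcases le_total 0 b with hb | hb
  · exact key_nonneg hsym hconc hb hs
  · have h := key_nonneg hsym hconc (by linarith : 0 ≤ -b) hs
    have h1 := hsym (b + s)
    have h2 := hsym (b - s)
    have e1 : -(b + s) = -b - s := by ring
    have e2 : -(b - s) = -b + s := by ring
    rw [e1] at h1; rw [e2] at h2
    linarith

/-- Lemma 2 (Lemma `lem:order`) of the paper: if the noise `ε` has a CDF `F`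
that is continuous, monotone, symmetric (`F x + F (-x) = 1`), convex on
`(-∞, 0]` and concave on `[0, ∞)`, then the squared residual `ε²` of the true
model is stochastically dominated by the squared residual `(ε - b)²` of a
model with bias `b`. -/
theorem sq_residual_stochastic_order
    {Ω : Type*} [MeasurableSpace Ω] (μ : Measure Ω) [IsProbabilityMeasure μ]
    (ε : Ω → ℝ) (hmeas : Measurable ε)
    (F : ℝ → ℝ)
    (hF : ∀ x : ℝ, (μ {ω | ε ω ≤ x}).toReal = F x)
    (hcont : Continuous F) (hmono : Monotone F)
    (hsym : ∀ x : ℝ, F x + F (-x) = 1)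
    (hconv : ConvexOn ℝ (Set.Iic (0 : ℝ)) F)
    (hconc : ConcaveOn ℝ (Set.Ici (0 : ℝ)) F)
    (b : ℝ) :
    (∀ x : ℝ, 0 ≤ x → μ {ω | (ε ω - b) ^ 2 ≤ x} ≤ μ {ω | (ε ω) ^ 2 ≤ x}) ∧
    (∀ x : ℝ, μ {ω | (ε ω) ^ 2 > x} ≤ μ {ω | (ε ω - b) ^ 2 > x}) := by
  have hFnn : ∀ x : ℝ, 0 ≤ F x := fun x => (hF x) ▸ ENNReal.toReal_nonneg
  have hle : ∀ x : ℝ, μ {ω | ε ω ≤ x} = ENNReal.ofReal (F x) := by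
    intro x
    rw [← hF x, ENNReal.ofReal_toReal (measure_ne_top μ _)]
  have hlt : ∀ a : ℝ, μ {ω | ε ω < a} = ENNReal.ofReal (F a) := by
    intro a
    have hU : {ω | ε ω < a} = ⋃ n : ℕ, {ω | ε ω ≤ a - 1 / (n + 1)} := by
      ext ω
      simp only [Set.mem_setOf_eq, Set.mem_iUnion]
      constructor
      · intro h
        obtain ⟨n, hn⟩ := exists_nat_one_div_lt (by linarith : (0:ℝ) < a - ε ω)
        exact ⟨n, by linarith⟩
      · rintro ⟨n, hn⟩
        have : (0:ℝ) < 1 / (n + 1) := by positivity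
        linarith
    have hmonoS : Monotone fun n : ℕ => {ω | ε ω ≤ a - 1 / (n + 1)} := by
      intro m n hmn ω hω
      simp only [Set.mem_setOf_eq] at hω ⊢
      have h1 : (1:ℝ) / (n + 1) ≤ 1 / (m + 1) := by
        apply one_div_le_one_div_of_le (by positivity)
        have : (m:ℝ) ≤ n := Nat.cast_le.2 hmn
        linarith
      linarith
    have ht1 := MeasureTheory.tendsto_measure_iUnion_atTop (μ := μ) hmonoS
    rw [← hU] at ht1
    have ht2 : Filter.Tendsto (fun n : ℕ => μ {ω | ε ω ≤ a - 1 / (n + 1)})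
        Filter.atTop (nhds (ENNReal.ofReal (F a))) := by
      simp only [hle]
      apply ENNReal.tendsto_ofReal
      apply (hcont.tendsto a).comp
      have : Filter.Tendsto (fun n : ℕ => a - 1 / ((n:ℝ) + 1)) Filter.atTop (nhds (a - 0)) :=
        (tendsto_const_nhds.sub tendsto_one_div_add_atTop_nhds_zero_nat)
      simpa using this
    exact tendsto_nhds_unique ht1 ht2
  have hint : ∀ a c : ℝ, a ≤ c →
      μ {ω | a ≤ ε ω ∧ ε ω ≤ c} = ENNReal.ofReal (F c - F a) := by
    intro a c hac
    have hsplit : {ω | ε ω ≤ c} = {ω | ε ω < a} ∪ {ω | a ≤ ε ω ∧ ε ω ≤ c} := by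
      ext ω
      simp only [Set.mem_setOf_eq, Set.mem_union]
      constructor
      · intro h
        rcases lt_or_ge (ε ω) a with h' | h'
        · exact Or.inl h'
        · exact Or.inr ⟨h', h⟩
      · rintro (h | ⟨_, h⟩)
        · linarith
        · exact h
    have hdisj : Disjoint {ω | ε ω < a} {ω | a ≤ ε ω ∧ ε ω ≤ c} := by
      rw [Set.disjoint_left]
      rintro ω h1 ⟨h2, _⟩
      exact absurd h2 (not_le.2 h1)
    have hm2 : MeasurableSet {ω | a ≤ ε ω ∧ ε ω ≤ c} :=
      (measurableSet_le measurable_const hmeas).inter (measurableSet_le hmeas measurable_const)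
    have := measure_union (μ := μ) hdisj hm2
    rw [← hsplit, hle c, hlt a] at this
    rw [ENNReal.ofReal_sub _ (hFnn a)]
    have h2 : μ {ω | a ≤ ε ω ∧ ε ω ≤ c} + ENNReal.ofReal (F a)
        = ENNReal.ofReal (F c) := by rw [add_comm]; exact this.symm
    exact ENNReal.eq_sub_of_add_eq ENNReal.ofReal_ne_top h2
  have part1 : ∀ x : ℝ, 0 ≤ x →
      μ {ω | (ε ω - b) ^ 2 ≤ x} ≤ μ {ω | (ε ω) ^ 2 ≤ x} := by
    intro x hx
    set s := Real.sqrt x with hsdef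
    have hs : 0 ≤ s := Real.sqrt_nonneg x
    have hs2 : s ^ 2 = x := Real.sq_sqrt hx
    have hset1 : {ω | (ε ω - b) ^ 2 ≤ x} = {ω | b - s ≤ ε ω ∧ ε ω ≤ b + s} := by
      ext ω
      simp only [Set.mem_setOf_eq]
      constructor
      · intro h
        constructor <;> nlinarith [sq_nonneg (ε ω - b + s), sq_nonneg (ε ω - b - s)]
      · rintro ⟨h1, h2⟩
        nlinarith
    have hset2 : {ω | (ε ω) ^ 2 ≤ x} = {ω | -s ≤ ε ω ∧ ε ω ≤ s} := by
      ext ω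
      simp only [Set.mem_setOf_eq]
      constructor
      · intro h
        constructor <;> nlinarith [sq_nonneg (ε ω + s), sq_nonneg (ε ω - s)]
      · rintro ⟨h1, h2⟩
        nlinarith
    rw [hset1, hset2, hint (b - s) (b + s) (by linarith), hint (-s) s (by linarith)]
    exact ENNReal.ofReal_le_ofReal (by
      have h := key_ineq hsym hconc b hs
      linarith)
  refine ⟨part1, ?_⟩
  intro x
  rcases lt_or_ge x 0 with hx | hx
  · have h1 : {ω | (ε ω) ^ 2 > x} = Set.univ := by
      ext ω; simp only [Set.mem_setOf_eq, Set.mem_univ, iff_true, gt_iff_lt]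
      nlinarith [sq_nonneg (ε ω)]
    have h2 : {ω | (ε ω - b) ^ 2 > x} = Set.univ := by
      ext ω; simp only [Set.mem_setOf_eq, Set.mem_univ, iff_true, gt_iff_lt]
      nlinarith [sq_nonneg (ε ω - b)]
    rw [h1, h2]
  · have hc1 : {ω | (ε ω) ^ 2 > x} = {ω | (ε ω) ^ 2 ≤ x}ᶜ := by
      ext ω; simp [not_le]
    have hc2 : {ω | (ε ω - b) ^ 2 > x} = {ω | (ε ω - b) ^ 2 ≤ x}ᶜ := by
      ext ω; simp [not_le]
    have hm1 : MeasurableSet {ω | (ε ω) ^ 2 ≤ x} :=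
      measurableSet_le (hmeas.pow_const 2) measurable_const
    have hm2 : MeasurableSet {ω | (ε ω - b) ^ 2 ≤ x} :=
      measurableSet_le ((hmeas.sub_const b).pow_const 2) measurable_const
    rw [hc1, hc2, measure_compl hm1 (measure_ne_top μ _),
      measure_compl hm2 (measure_ne_top μ _)]
    exact tsub_le_tsub_left (part1 x hx) _
end

section
/- Let ε₁, …, εₙ be mutually independent real-valued random variables, where each εᵢ has a continuous cumulative distribution function Fᵢ : ℝ → ℝ that is monotone nondecreasing, satisfies Fᵢ(x) + Fᵢ(−x) = 1 for all x ∈ ℝ, is convex on (−∞, 0] and concave on [0, ∞). Let b₁, …, bₙ ∈ ℝ and let w₁, …, wₙ ≥ 0. Then ∑ᵢ wᵢ εᵢ² is stochastically dominated by ∑ᵢ wᵢ (εᵢ − bᵢ)²: for all x ∈ ℝ, P(∑ᵢ wᵢ εᵢ² > x) ≤ P(∑ᵢ wᵢ (εᵢ − bᵢ)² > x). -/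
open MeasureTheory ProbabilityTheory

lemma cdf_shift_ineq (F : ℝ → ℝ) (hsym : ∀ x, F x + F (-x) = 1)
    (hconc : ConcaveOn ℝ (Set.Ici (0:ℝ)) F) :
    ∀ b t : ℝ, 0 ≤ t → F (b + t) - F (b - t) ≤ F t - F (-t) := by
  have key : ∀ b t : ℝ, 0 ≤ b → 0 ≤ t → F (b + t) - F (b - t) ≤ F t - F (-t) := by
    intro b t hb ht
    have hst := hsym t
    have hs0 := hsym 0
    rw [neg_zero] at hs0
    rcases le_or_gt b t with hbt | htb
    · -- b ≤ t : midpoint concavity at t-b, t+b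
      have h := hconc.2 (Set.mem_Ici.mpr (by linarith : (0:ℝ) ≤ t - b))
        (Set.mem_Ici.mpr (by linarith : (0:ℝ) ≤ t + b))
        (by norm_num : (0:ℝ) ≤ 1/2) (by norm_num : (0:ℝ) ≤ 1/2)
        (by norm_num : (1:ℝ)/2 + 1/2 = 1)
      have e : (1/2 : ℝ) • (t - b) + (1/2 : ℝ) • (t + b) = t := by
        simp only [smul_eq_mul]; ring
      rw [e] at h
      simp only [smul_eq_mul] at h
      have hsb := hsym (t - b)
      have e2 : F (-(t - b)) = F (b - t) := congrArg F (by ring)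
      rw [e2] at hsb
      have e3 : F (t + b) = F (b + t) := congrArg F (by ring)
      linarith
    · -- t < b, so b + t > 0
      have hbt0 : 0 < b + t := by linarith
      set a : ℝ := 2 * t / (b + t) with ha
      have ha0 : 0 ≤ a := by positivity
      have ha1 : a ≤ 1 := by rw [ha, div_le_one hbt0]; linarith
      have h1 := hconc.2 (Set.mem_Ici.mpr (by linarith : (0:ℝ) ≤ b + t))
        (Set.mem_Ici.mpr (le_refl (0:ℝ))) ha0 (by linarith : (0:ℝ) ≤ 1 - a)
        (by ring : a + (1 - a) = 1)
      have h2 := hconc.2 (Set.mem_Ici.mpr (by linarith : (0:ℝ) ≤ b + t))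
        (Set.mem_Ici.mpr (le_refl (0:ℝ))) (by linarith : (0:ℝ) ≤ 1 - a) ha0
        (by ring : (1 - a) + a = 1)
      have e1 : a • (b + t) + (1 - a) • (0:ℝ) = 2 * t := by
        simp only [smul_eq_mul, mul_zero, add_zero, ha]; field_simp
      have e2 : (1 - a) • (b + t) + a • (0:ℝ) = b - t := by
        simp only [smul_eq_mul, mul_zero, add_zero, ha]; field_simp; ring
      rw [e1] at h1
      rw [e2] at h2
      simp only [smul_eq_mul] at h1 h2
      have h3 := hconc.2 (Set.mem_Ici.mpr (le_refl (0:ℝ)))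
        (Set.mem_Ici.mpr (by linarith : (0:ℝ) ≤ 2 * t))
        (by norm_num : (0:ℝ) ≤ 1/2) (by norm_num : (0:ℝ) ≤ 1/2)
        (by norm_num : (1:ℝ)/2 + 1/2 = 1)
      have e3 : (1/2 : ℝ) • (0:ℝ) + (1/2 : ℝ) • (2 * t) = t := by
        simp only [smul_eq_mul]; ring
      rw [e3] at h3
      simp only [smul_eq_mul] at h3
      linarith
  intro b t ht
  rcases le_or_gt 0 b with hb | hb
  · exact key b t hb ht
  · have h1 := hsym (b + t)
    have h2 := hsym (t - b)
    have e1 : F (-(b + t)) = F (-b - t) := congrArg F (by ring)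
    have e2 : F (-(t - b)) = F (b - t) := congrArg F (by ring)
    have e4 : F (-b + t) = F (t - b) := congrArg F (by ring)
    rw [e1] at h1; rw [e2] at h2
    have h3 := key (-b) t (by linarith) ht
    rw [e4] at h3
    linarith

lemma one_dim_dom {Ω : Type*} [MeasurableSpace Ω] (μ : Measure Ω) [IsProbabilityMeasure μ]
    (X : Ω → ℝ) (hX : Measurable X) (F : ℝ → ℝ)
    (hF : ∀ x, (μ {ω | X ω ≤ x}).toReal = F x) (hcont : Continuous F)
    (hsym : ∀ x, F x + F (-x) = 1) (hconc : ConcaveOn ℝ (Set.Ici (0:ℝ)) F)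
    (c w : ℝ) (hw : 0 ≤ w) (t : ℝ) :
    μ {ω | t < w * (X ω) ^ 2} ≤ μ {ω | t < w * (X ω - c) ^ 2} := by
  rcases lt_or_ge t 0 with ht | ht
  · have huniv : {ω | t < w * (X ω - c) ^ 2} = Set.univ := by
      ext ω; simp only [Set.mem_setOf_eq, Set.mem_univ, iff_true]
      nlinarith [sq_nonneg (X ω - c)]
    rw [huniv]; exact measure_mono (Set.subset_univ _)
  rcases eq_or_lt_of_le hw with hw0 | hw0
  · have hempty : {ω | t < w * (X ω) ^ 2} = ∅ := by
      ext ω; simp only [Set.mem_setOf_eq, Set.mem_empty_iff_false, iff_false, not_lt, ← hw0]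
      nlinarith
    rw [hempty]; simp
  -- main case : t ≥ 0, w > 0
  have hle : ∀ x, μ {ω | X ω ≤ x} = ENNReal.ofReal (F x) := by
    intro x; rw [← hF x, ENNReal.ofReal_toReal (measure_ne_top μ _)]
  have hF01 : ∀ x, 0 ≤ F x ∧ F x ≤ 1 := by
    intro x
    rw [← hF x]
    refine ⟨ENNReal.toReal_nonneg, ?_⟩
    simpa using ENNReal.toReal_mono ENNReal.one_ne_top (prob_le_one (μ := μ) (s := {ω | X ω ≤ x}))
  have hlt : ∀ x, μ {ω | X ω < x} = ENNReal.ofReal (F x) := by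
    intro x
    have hun : {ω | X ω < x} = ⋃ n : ℕ, {ω | X ω ≤ x - 1/(n+1)} := by
      ext ω; simp only [Set.mem_setOf_eq, Set.mem_iUnion]
      constructor
      · intro h
        obtain ⟨n, hn⟩ := exists_nat_one_div_lt (by linarith : (0:ℝ) < x - X ω)
        exact ⟨n, by linarith⟩
      · rintro ⟨n, hn⟩
        have hp : (0:ℝ) < 1/(n+1) := by positivity
        linarith
    have hmon : Monotone (fun n : ℕ => {ω | X ω ≤ x - 1/((n:ℝ)+1)}) := by
      intro m n hmn ω h
      simp only [Set.mem_setOf_eq] at *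
      have hc : ((m:ℝ)+1) ≤ (n:ℝ)+1 := by
        have := (Nat.cast_le (α := ℝ)).mpr hmn; linarith
      have h2 : (1:ℝ)/(n+1) ≤ 1/(m+1) := one_div_le_one_div_of_le (by positivity) hc
      linarith
    have h1 : Filter.Tendsto (fun n : ℕ => μ {ω | X ω ≤ x - 1/((n:ℝ)+1)}) Filter.atTop
        (nhds (μ (⋃ n : ℕ, {ω | X ω ≤ x - 1/((n:ℝ)+1)}))) := tendsto_measure_iUnion_atTop hmon
    have h2 : Filter.Tendsto (fun n : ℕ => μ {ω | X ω ≤ x - 1/((n:ℝ)+1)}) Filter.atTop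
        (nhds (ENNReal.ofReal (F x))) := by
      simp only [hle]
      apply (ENNReal.continuous_ofReal.tendsto _).comp
      have hx : Filter.Tendsto (fun n : ℕ => x - 1/((n:ℝ)+1)) Filter.atTop (nhds x) := by
        have h0 := tendsto_one_div_add_atTop_nhds_zero_nat (𝕜 := ℝ)
        have := Filter.Tendsto.sub (tendsto_const_nhds (x := x) (f := Filter.atTop (α := ℕ))) h0
        simpa using this
      exact ((hcont.tendsto x).comp hx)
    rw [hun]
    exact tendsto_nhds_unique h1 h2
  set r := Real.sqrt (t / w) with hr
  have hr0 : 0 ≤ r := Real.sqrt_nonneg _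
  have hr2 : r ^ 2 = t / w := Real.sq_sqrt (by positivity)
  have hiff : ∀ d u : ℝ, t < w * (u - d) ^ 2 ↔ (d + r < u ∨ u < d - r) := by
    intro d u
    rw [show w * (u - d)^2 = (u-d)^2 * w by ring, ← div_lt_iff₀ hw0, ← hr2]
    constructor
    · intro h; by_contra hcon; push_neg at hcon; nlinarith [hcon.1, hcon.2]
    · rintro (h | h) <;> nlinarith
  have hcompute : ∀ d : ℝ, (μ {ω | t < w * (X ω - d) ^ 2}).toReal = 1 - F (d + r) + F (d - r) := by
    intro d
    have hset : {ω | t < w * (X ω - d) ^ 2} = {ω | d + r < X ω} ∪ {ω | X ω < d - r} := by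
      ext ω; simp only [Set.mem_setOf_eq, Set.mem_union]; exact hiff d (X ω)
    have hdisj : Disjoint {ω | d + r < X ω} {ω | X ω < d - r} := by
      rw [Set.disjoint_left]; intro ω h1 h2
      simp only [Set.mem_setOf_eq] at h1 h2; linarith
    have hm2 : MeasurableSet {ω | X ω < d - r} := measurableSet_lt hX measurable_const
    have hgt : μ {ω | d + r < X ω} = 1 - ENNReal.ofReal (F (d + r)) := by
      have hc : {ω | d + r < X ω} = {ω | X ω ≤ d + r}ᶜ := by
        ext ω; simp only [Set.mem_setOf_eq, Set.mem_compl_iff, not_le]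
      rw [hc, measure_compl (measurableSet_le hX measurable_const) (measure_ne_top μ _),
        hle, measure_univ]
    rw [hset, measure_union hdisj hm2, hgt, hlt]
    rw [ENNReal.toReal_add (ENNReal.sub_ne_top ENNReal.one_ne_top) ENNReal.ofReal_ne_top,
      ENNReal.toReal_sub_of_le (ENNReal.ofReal_le_one.mpr (hF01 (d + r)).2) ENNReal.one_ne_top,
      ENNReal.toReal_ofReal (hF01 (d + r)).1, ENNReal.toReal_ofReal (hF01 (d - r)).1]
    simp
  rw [← ENNReal.toReal_le_toReal (measure_ne_top μ _) (measure_ne_top μ _)]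
  have h0 : {ω | t < w * (X ω) ^ 2} = {ω | t < w * (X ω - 0) ^ 2} := by
    simp only [sub_zero]
  rw [h0, hcompute 0, hcompute c]
  have hkey := cdf_shift_ineq F hsym hconc c r hr0
  simp only [zero_add, zero_sub]
  linarith

lemma step_lemma {Ω : Type*} [MeasurableSpace Ω] (μ : Measure Ω) [IsProbabilityMeasure μ]
    (X S : Ω → ℝ) (hX : Measurable X) (hS : Measurable S) (hind : IndepFun X S μ)
    (g h : ℝ → ℝ) (hg : Measurable g) (hh : Measurable h)
    (hdom : ∀ t : ℝ, μ {ω | t < g (X ω)} ≤ μ {ω | t < h (X ω)}) (x : ℝ) :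
    μ {ω | x < g (X ω) + S ω} ≤ μ {ω | x < h (X ω) + S ω} := by
  have hmap : μ.map (fun ω => (X ω, S ω)) = (μ.map X).prod (μ.map S) :=
    (indepFun_iff_map_prod_eq_prod_map_map hX.aemeasurable hS.aemeasurable).mp hind
  have key : ∀ f : ℝ → ℝ, Measurable f →
      μ {ω | x < f (X ω) + S ω} = ∫⁻ s, μ.map X {u | x - s < f u} ∂(μ.map S) := by
    intro f hf
    have hmset : MeasurableSet {p : ℝ × ℝ | x < f p.1 + p.2} :=
      measurableSet_lt measurable_const ((hf.comp measurable_fst).add measurable_snd)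
    calc μ {ω | x < f (X ω) + S ω}
        = μ.map (fun ω => (X ω, S ω)) {p : ℝ × ℝ | x < f p.1 + p.2} := by
          rw [Measure.map_apply (hX.prodMk hS) hmset]; rfl
      _ = ((μ.map X).prod (μ.map S)) {p : ℝ × ℝ | x < f p.1 + p.2} := by rw [hmap]
      _ = ∫⁻ s, μ.map X ((fun u => (u, s)) ⁻¹' {p : ℝ × ℝ | x < f p.1 + p.2}) ∂(μ.map S) :=
          Measure.prod_apply_symm hmset
      _ = ∫⁻ s, μ.map X {u | x - s < f u} ∂(μ.map S) := by
          congr 1; funext s; congr 1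
          ext u
          simp only [Set.mem_preimage, Set.mem_setOf_eq]
          constructor <;> intro hh' <;> linarith
  rw [key g hg, key h hh]
  refine lintegral_mono fun s => ?_
  rw [Measure.map_apply hX (measurableSet_lt measurable_const hg),
    Measure.map_apply hX (measurableSet_lt measurable_const hh)]
  exact hdom (x - s)


/-- Corollary 1 of the paper: for independent noises `εᵢ` with symmetric
unimodal distributions (encoded via their CDFs), the weighted fit error of the
true model `∑ᵢ wᵢ εᵢ²` is stochastically dominated by the weighted fit error
`∑ᵢ wᵢ (εᵢ - bᵢ)²` of a model with biases `bᵢ`. -/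
theorem weighted_fit_error_stochastic_order
    {Ω : Type*} [MeasurableSpace Ω] (μ : Measure Ω) [IsProbabilityMeasure μ]
    (n : ℕ) (ε : Fin n → Ω → ℝ) (hmeas : ∀ i, Measurable (ε i))
    (hindep : iIndepFun ε μ)
    (F : Fin n → ℝ → ℝ)
    (hF : ∀ i, ∀ x : ℝ, (μ {ω | ε i ω ≤ x}).toReal = F i x)
    (hcont : ∀ i, Continuous (F i)) (hmono : ∀ i, Monotone (F i))
    (hsym : ∀ i, ∀ x : ℝ, F i x + F i (-x) = 1)
    (hconv : ∀ i, ConvexOn ℝ (Set.Iic (0 : ℝ)) (F i))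
    (hconc : ∀ i, ConcaveOn ℝ (Set.Ici (0 : ℝ)) (F i))
    (b : Fin n → ℝ) (w : Fin n → ℝ) (hw : ∀ i, 0 ≤ w i) :
    ∀ x : ℝ, μ {ω | ∑ i, w i * (ε i ω) ^ 2 > x} ≤
      μ {ω | ∑ i, w i * (ε i ω - b i) ^ 2 > x} := by
  classical
  set c : ℕ → Fin n → ℝ := fun k i => if (i : ℕ) < k then 0 else b i with hc
  have main : ∀ k : ℕ, ∀ x : ℝ,
      μ {ω | x < ∑ i, w i * (ε i ω - c k i) ^ 2} ≤
        μ {ω | x < ∑ i, w i * (ε i ω - b i) ^ 2} := by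
    intro k
    induction k with
    | zero => intro x; simp [hc]
    | succ k ih =>
      intro x
      rcases le_or_gt n k with hnk | hkn
      · have hsame : ∀ i : Fin n, c (k+1) i = c k i := fun i => by
          simp only [hc]
          rw [if_pos (lt_of_lt_of_le i.isLt (le_trans hnk (Nat.le_succ k))),
            if_pos (lt_of_lt_of_le i.isLt hnk)]
        have hseteq : {ω | x < ∑ i, w i * (ε i ω - c (k+1) i) ^ 2}
            = {ω | x < ∑ i, w i * (ε i ω - c k i) ^ 2} := by
          ext ω; simp only [Set.mem_setOf_eq]
          rw [Finset.sum_congr rfl fun i _ => by rw [hsame i]]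
        rw [hseteq]; exact ih x
      · set j : Fin n := ⟨k, hkn⟩ with hj
        have hcj1 : c (k+1) j = 0 := by simp [hc, hj]
        have hcj2 : c k j = b j := by simp [hc, hj]
        have hcne : ∀ i : Fin n, i ≠ j → c (k+1) i = c k i := by
          intro i hi
          simp only [hc]
          rcases lt_or_ge (i : ℕ) k with h | h
          · rw [if_pos (Nat.lt_succ_of_lt h), if_pos h]
          rcases eq_or_lt_of_le h with h' | h'
          · exact absurd (Fin.ext h'.symm : i = j) hi
          · rw [if_neg (by omega), if_neg (by omega)]
        set S : Ω → ℝ := fun ω =>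
          ∑ i : (Finset.univ.erase j : Finset (Fin n)), w i * (ε i ω - c k i) ^ 2 with hSdef
        have hS_eq : ∀ ω, S ω = ∑ i ∈ Finset.univ.erase j, w i * (ε i ω - c k i) ^ 2 := by
          intro ω
          simp only [hSdef]
          exact Finset.sum_coe_sort _ fun i => w i * (ε i ω - c k i) ^ 2
        have hSmeas : Measurable S := by
          apply Finset.measurable_sum
          intro i _
          exact (((hmeas i).sub measurable_const).pow_const 2).const_mul _
        have hij : IndepFun (fun a (i : ({j} : Finset (Fin n))) => ε i a)
            (fun a (i : (Finset.univ.erase j : Finset (Fin n))) => ε i a) μ :=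
          hindep.indepFun_finset {j} (Finset.univ.erase j)
            (by simp [Finset.disjoint_left]) hmeas
        have hSind : IndepFun (ε j) S μ := by
          have h1 : Measurable (fun v : ↥({j} : Finset (Fin n)) → ℝ =>
              v ⟨j, Finset.mem_singleton_self j⟩) := measurable_pi_apply _
          have h2 : Measurable (fun v : ↥(Finset.univ.erase j) → ℝ =>
              ∑ i : ↥(Finset.univ.erase j), w i * (v i - c k i) ^ 2) := by
            apply Finset.measurable_sum
            intro i _
            exact (((measurable_pi_apply i).sub measurable_const).pow_const 2).const_mul _
          exact hij.comp h1 h2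
        have hsplit : ∀ (d : Fin n → ℝ) (ω : Ω),
            ∑ i, w i * (ε i ω - d i) ^ 2
              = w j * (ε j ω - d j) ^ 2 + ∑ i ∈ Finset.univ.erase j, w i * (ε i ω - d i) ^ 2 :=
          fun d ω => (Finset.add_sum_erase _ _ (Finset.mem_univ j)).symm
        have hsum1 : ∀ ω, ∑ i, w i * (ε i ω - c (k+1) i) ^ 2 = w j * (ε j ω) ^ 2 + S ω := by
          intro ω
          rw [hsplit (c (k+1)) ω, hcj1, sub_zero, hS_eq ω]
          congr 1
          exact Finset.sum_congr rfl fun i hi => by rw [hcne i (Finset.ne_of_mem_erase hi)]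
        have hsum2 : ∀ ω, ∑ i, w i * (ε i ω - c k i) ^ 2
            = w j * (ε j ω - b j) ^ 2 + S ω := by
          intro ω
          rw [hsplit (c k) ω, hcj2, hS_eq ω]
        have hdom : ∀ t : ℝ, μ {ω | t < (fun u => w j * u ^ 2) (ε j ω)}
            ≤ μ {ω | t < (fun u => w j * (u - b j) ^ 2) (ε j ω)} := fun t =>
          one_dim_dom μ (ε j) (hmeas j) (F j) (hF j) (hcont j) (hsym j) (hconc j)
            (b j) (w j) (hw j) t
        calc μ {ω | x < ∑ i, w i * (ε i ω - c (k+1) i) ^ 2}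
            = μ {ω | x < (fun u => w j * u ^ 2) (ε j ω) + S ω} := by
              congr 1; ext ω; simp only [Set.mem_setOf_eq]; rw [hsum1 ω]
          _ ≤ μ {ω | x < (fun u => w j * (u - b j) ^ 2) (ε j ω) + S ω} :=
              step_lemma μ (ε j) S (hmeas j) hSmeas hSind _ _
                ((measurable_id.pow_const 2).const_mul _)
                (((measurable_id.sub measurable_const).pow_const 2).const_mul _) hdom x
          _ = μ {ω | x < ∑ i, w i * (ε i ω - c k i) ^ 2} := by
              congr 1; ext ω; simp only [Set.mem_setOf_eq]; rw [hsum2 ω]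
          _ ≤ _ := ih x
  intro x
  simp only [gt_iff_lt]
  have h := main n x
  have hend : ∀ ω, ∑ i, w i * (ε i ω - c n i) ^ 2 = ∑ i, w i * (ε i ω) ^ 2 := fun ω =>
    Finset.sum_congr rfl fun i _ => by simp [hc, i.isLt]
  have hseteq : {ω | x < ∑ i, w i * (ε i ω - c n i) ^ 2}
      = {ω | x < ∑ i, w i * (ε i ω) ^ 2} := by
    ext ω; simp only [Set.mem_setOf_eq]; rw [hend ω]
  rwa [hseteq] at h
end

section
/- Let (Ω, P) be a probability space and ε₁, …, εₙ : Ω → ℝ mutually independent random variables, where each εᵢ has a continuous cumulative distribution function Fᵢ : ℝ → ℝ that is monotone nondecreasing, satisfies Fᵢ(x) + Fᵢ(−x) = 1 for all x ∈ ℝ, is convex on (−∞, 0] and concave on [0, ∞). Let b₁, …, bₙ ∈ ℝ, let w₁, …, wₙ ≥ 0, let c ∈ ℝ and α ∈ [0, 1]. If P(∑ᵢ wᵢ (εᵢ − bᵢ)² ≤ c) ≥ 1 − α, then P(∑ᵢ wᵢ εᵢ² ≤ c) ≥ 1 − α. -/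
open MeasureTheory ProbabilityTheory

lemma concave_incr {F : ℝ → ℝ} (hconc : ConcaveOn ℝ (Set.Ici (0:ℝ)) F)
    {a b d : ℝ} (ha : 0 ≤ a) (hab : a ≤ b) (hd : 0 ≤ d) :
    F (b + d) + F a ≤ F (a + d) + F b := by
  rcases eq_or_lt_of_le (by linarith : a ≤ b + d) with heq | hlt
  · have hd0 : d = 0 := by linarith
    have hab' : a = b := by linarith
    simp [hd0, hab']
  · set L : ℝ := b + d - a with hL
    have hLpos : 0 < L := by simp [hL]; linarith
    set l : ℝ := d / L with hl
    have hl0 : 0 ≤ l := div_nonneg hd hLpos.le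
    have hl1 : l ≤ 1 := by
      rw [hl, div_le_one hLpos]; linarith
    have hz : (0:ℝ) ≤ b + d := by linarith
    have h1 := hconc.2 (Set.mem_Ici.mpr ha) (Set.mem_Ici.mpr hz)
      (by linarith : (0:ℝ) ≤ 1 - l) hl0 (by ring)
    have h2 := hconc.2 (Set.mem_Ici.mpr ha) (Set.mem_Ici.mpr hz)
      hl0 (by linarith : (0:ℝ) ≤ 1 - l) (by ring)
    have e1 : (1 - l) • a + l • (b + d) = a + d := by
      simp only [smul_eq_mul]
      field_simp [hl]
      have hlL : l * (b + d - a) = d := by rw [hl, ← hL]; exact div_mul_cancel₀ d hLpos.ne'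
      linear_combination hlL
    have e2 : l • a + (1 - l) • (b + d) = b := by
      simp only [smul_eq_mul]
      field_simp [hl]
      have hlL : l * (b + d - a) = d := by rw [hl, ← hL]; exact div_mul_cancel₀ d hLpos.ne'
      linear_combination -hlL
    rw [e1] at h1
    rw [e2] at h2
    simp only [smul_eq_mul] at h1 h2
    linarith

lemma key_F_nonneg{F : ℝ → ℝ} (hsym : ∀ x, F x + F (-x) = 1)
    (hconc : ConcaveOn ℝ (Set.Ici (0:ℝ)) F)
    {t b : ℝ} (ht : 0 ≤ t) (hb : 0 ≤ b) :
    F (b + t) - F (b - t) ≤ F t - F (-t) := by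
  have hFt := hsym t
  have hF0 : F 0 = 1/2 := by have := hsym 0; simp at this; linarith
  rcases le_total b t with hbt | htb
  · have hsymbt := hsym (b - t)
    have e0 : F (-(b - t)) = F (t - b) := congrArg F (by ring)
    have h := concave_incr hconc (a := t - b) (b := t) (d := b)
      (by linarith) (by linarith) hb
    have e1 : F (t - b + b) = F t := congrArg F (by ring)
    have e2 : F (t + b) = F (b + t) := congrArg F (by ring)
    linarith
  · have h1 := concave_incr hconc (a := (0:ℝ)) (b := b) (d := t) le_rfl hb ht
    have h2 := concave_incr hconc (a := (0:ℝ)) (b := b - t) (d := t)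
      le_rfl (by linarith) ht
    simp only [zero_add] at h1 h2
    have e1 : F (b - t + t) = F b := congrArg F (by ring)
    linarith

lemma key_F {F : ℝ → ℝ} (hsym : ∀ x, F x + F (-x) = 1)
    (hconc : ConcaveOn ℝ (Set.Ici (0:ℝ)) F)
    {t : ℝ} (ht : 0 ≤ t) (b : ℝ) :
    F (b + t) - F (b - t) ≤ F t - F (-t) := by
  rcases le_total 0 b with hb | hb
  · exact key_F_nonneg hsym hconc ht hb
  · have h := key_F_nonneg hsym hconc ht (by linarith : 0 ≤ -b)
    have hA : F (b + t) + F (-b - t) = 1 := by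
      have := hsym (b + t)
      have e : F (-(b + t)) = F (-b - t) := congrArg F (by ring)
      linarith
    have hB : F (b - t) + F (-b + t) = 1 := by
      have := hsym (b - t)
      have e : F (-(b - t)) = F (-b + t) := congrArg F (by ring)
      linarith
    linarith

section Meas
variable {Ω : Type*} [MeasurableSpace Ω] (μ : Measure Ω) [IsProbabilityMeasure μ]
  {X : Ω → ℝ} {F : ℝ → ℝ}

lemma meas_Iic'(hF : ∀ x, (μ {ω | X ω ≤ x}).toReal = F x) (x : ℝ) :
    μ {ω | X ω ≤ x} = ENNReal.ofReal (F x) := by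
  rw [← hF x, ENNReal.ofReal_toReal (measure_ne_top μ _)]

lemma meas_Iio'(hF : ∀ x, (μ {ω | X ω ≤ x}).toReal = F x)
    (hcont : Continuous F) (x : ℝ) :
    μ {ω | X ω < x} = ENNReal.ofReal (F x) := by
  have hu : {ω | X ω < x} = ⋃ n : ℕ, {ω | X ω ≤ x - 1/(n+1)} := by
    ext ω
    simp only [Set.mem_setOf_eq, Set.mem_iUnion]
    constructor
    · intro hlt
      obtain ⟨n, hn⟩ := exists_nat_one_div_lt (by linarith : 0 < x - X ω)
      exact ⟨n, by linarith⟩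
    · rintro ⟨n, hn⟩
      have hpos : (0:ℝ) < 1/((n:ℝ)+1) := by positivity
      linarith
  have hmonoS : Monotone (fun n : ℕ => {ω | X ω ≤ x - 1/((n:ℝ)+1)}) := by
    intro m n hmn ω hω
    simp only [Set.mem_setOf_eq] at *
    have hle : 1/((n:ℝ)+1) ≤ 1/((m:ℝ)+1) := by
      apply one_div_le_one_div_of_le (by positivity)
      have : (m:ℝ) ≤ n := by exact_mod_cast hmn
      linarith
    linarith
  have ht := tendsto_measure_iUnion_atTop (μ := μ) hmonoS
  rw [← hu] at ht
  have ht2 : Filter.Tendsto (fun n : ℕ => μ {ω | X ω ≤ x - 1/((n:ℝ)+1)})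
      Filter.atTop (nhds (ENNReal.ofReal (F x))) := by
    simp only [meas_Iic' μ hF]
    apply (ENNReal.continuous_ofReal.tendsto _).comp
    apply (hcont.tendsto x).comp
    have h1 : Filter.Tendsto (fun n : ℕ => 1/((n:ℝ)+1)) Filter.atTop (nhds 0) :=
      tendsto_one_div_add_atTop_nhds_zero_nat
    simpa using Filter.Tendsto.sub (tendsto_const_nhds (x := x)) h1
  exact tendsto_nhds_unique ht ht2

lemma meas_band(hX : Measurable X) (hF : ∀ x, (μ {ω | X ω ≤ x}).toReal = F x)
    (hcont : Continuous F) {u v : ℝ} (huv : u ≤ v) :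
    μ {ω | u ≤ X ω ∧ X ω ≤ v} = ENNReal.ofReal (F v - F u) := by
  have hFu0 : 0 ≤ F u := by rw [← hF u]; exact ENNReal.toReal_nonneg
  have hset : {ω | u ≤ X ω ∧ X ω ≤ v} = {ω | X ω ≤ v} \ {ω | X ω < u} := by
    ext ω
    simp only [Set.mem_setOf_eq, Set.mem_diff, not_lt]
    tauto
  have hd := measure_diff (μ := μ) (s₁ := {ω | X ω ≤ v}) (s₂ := {ω | X ω < u})
      (fun ω hω => le_trans (le_of_lt hω) huv)
      ((measurableSet_lt hX measurable_const).nullMeasurableSet)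
      (measure_ne_top μ _)
  rw [hset, hd, meas_Iic' μ hF, meas_Iio' μ hF hcont, ENNReal.ofReal_sub _ hFu0]

lemma marginal0(hX : Measurable X) (hF : ∀ x, (μ {ω | X ω ≤ x}).toReal = F x)
    (hcont : Continuous F) (hsym : ∀ x, F x + F (-x) = 1)
    (hconc : ConcaveOn ℝ (Set.Ici (0:ℝ)) F) (b s : ℝ) :
    μ {ω | (X ω - b)^2 ≤ s} ≤ μ {ω | (X ω)^2 ≤ s} := by
  rcases lt_or_ge s 0 with hs | hs
  · have hempty : {ω | (X ω - b)^2 ≤ s} = ∅ := by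
      ext ω
      simp only [Set.mem_setOf_eq, Set.mem_empty_iff_false, iff_false, not_le]
      nlinarith [sq_nonneg (X ω - b)]
    simp [hempty]
  · set t : ℝ := Real.sqrt s with htdef
    have ht : 0 ≤ t := Real.sqrt_nonneg s
    have ht2 : t^2 = s := Real.sq_sqrt hs
    have hev : ∀ β : ℝ, {ω | (X ω - β)^2 ≤ s} = {ω | β - t ≤ X ω ∧ X ω ≤ β + t} := by
      intro β
      ext ω
      simp only [Set.mem_setOf_eq]
      constructor
      · intro hle
        rw [← ht2] at hle
        obtain ⟨h1, h2⟩ := abs_le_of_sq_le_sq' hle ht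
        constructor <;> linarith
      · rintro ⟨h1, h2⟩
        rw [← ht2]
        exact sq_le_sq' (by linarith) (by linarith)
    have hev0 : {ω | (X ω)^2 ≤ s} = {ω | -t ≤ X ω ∧ X ω ≤ t} := by
      have := hev 0
      simp only [sub_zero, zero_sub, zero_add] at this
      exact this
    rw [hev b, hev0, meas_band μ hX hF hcont (by linarith),
      meas_band μ hX hF hcont (by linarith : -t ≤ t)]
    exact ENNReal.ofReal_le_ofReal (key_F hsym hconc ht b)

lemma marginal' (hX : Measurable X) (hF : ∀ x, (μ {ω | X ω ≤ x}).toReal = F x)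
    (hcont : Continuous F) (hsym : ∀ x, F x + F (-x) = 1)
    (hconc : ConcaveOn ℝ (Set.Ici (0:ℝ)) F) (b : ℝ) {w : ℝ} (hw : 0 ≤ w) (s : ℝ) :
    μ {ω | w * (X ω - b)^2 ≤ s} ≤ μ {ω | w * (X ω)^2 ≤ s} := by
  rcases eq_or_lt_of_le hw with hw0 | hwpos
  · simp [← hw0]
  · have hiff : ∀ y : ℝ, (w * y ≤ s ↔ y ≤ s / w) := by
      intro y
      rw [le_div_iff₀ hwpos, mul_comm]
    simp only [hiff]
    exact marginal0 μ hX hF hcont hsym hconc b (s / w)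

end Meas

lemma step_indep{Ω : Type*} [MeasurableSpace Ω] (μ : Measure Ω) [IsProbabilityMeasure μ]
    {X R : Ω → ℝ} (hX : Measurable X) (hR : Measurable R) (hind : IndepFun X R μ)
    {f g : ℝ → ℝ} (hf : Measurable f) (hg : Measurable g)
    (hdom : ∀ s : ℝ, μ {ω | f (X ω) ≤ s} ≤ μ {ω | g (X ω) ≤ s}) (c : ℝ) :
    μ {ω | f (X ω) + R ω ≤ c} ≤ μ {ω | g (X ω) + R ω ≤ c} := by
  have hmap := (indepFun_iff_map_prod_eq_prod_map_map hX.aemeasurable hR.aemeasurable).mp hind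
  haveI : IsProbabilityMeasure (μ.map X) := Measure.isProbabilityMeasure_map hX.aemeasurable
  haveI : IsProbabilityMeasure (μ.map R) := Measure.isProbabilityMeasure_map hR.aemeasurable
  have key : ∀ φ : ℝ → ℝ, Measurable φ →
      μ {ω | φ (X ω) + R ω ≤ c} =
        ∫⁻ y, μ {ω | φ (X ω) ≤ c - y} ∂(μ.map R) := by
    intro φ hφ
    have hs : MeasurableSet {p : ℝ × ℝ | φ p.1 + p.2 ≤ c} :=
      measurableSet_le ((hφ.comp measurable_fst).add measurable_snd) measurable_const
    have h1 : μ {ω | φ (X ω) + R ω ≤ c}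
        = μ.map (fun ω => (X ω, R ω)) {p : ℝ × ℝ | φ p.1 + p.2 ≤ c} := by
      rw [Measure.map_apply (hX.prodMk hR) hs]
      rfl
    rw [h1, hmap, Measure.prod_apply_symm hs]
    congr 1
    ext y
    have h2 : ((fun x => (x, y)) ⁻¹' {p : ℝ × ℝ | φ p.1 + p.2 ≤ c})
        = {x | φ x ≤ c - y} := by
      ext x
      simp only [Set.mem_preimage, Set.mem_setOf_eq]
      constructor <;> intro h <;> linarith
    rw [h2, Measure.map_apply hX (measurableSet_le hφ measurable_const)]
    rfl
  rw [key f hf, key g hg]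
  exact lintegral_mono fun y => hdom (c - y)

/-- If the weighted fit error of a biased model is below the threshold `c`
with probability at least `1 - α`, then so is the weighted fit error of the
true model, whose residuals are the independent symmetric unimodal noises
`εᵢ` themselves. -/
theorem true_fit_error_confidence
    {Ω : Type*} [MeasurableSpace Ω] (μ : Measure Ω) [IsProbabilityMeasure μ]
    (n : ℕ) (ε : Fin n → Ω → ℝ) (hmeas : ∀ i, Measurable (ε i))
    (hindep : iIndepFun ε μ)
    (F : Fin n → ℝ → ℝ)
    (hF : ∀ i, ∀ x : ℝ, (μ {ω | ε i ω ≤ x}).toReal = F i x)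
    (hcont : ∀ i, Continuous (F i)) (hmono : ∀ i, Monotone (F i))
    (hsym : ∀ i, ∀ x : ℝ, F i x + F i (-x) = 1)
    (hconv : ∀ i, ConvexOn ℝ (Set.Iic (0 : ℝ)) (F i))
    (hconc : ∀ i, ConcaveOn ℝ (Set.Ici (0 : ℝ)) (F i))
    (b : Fin n → ℝ) (w : Fin n → ℝ) (hw : ∀ i, 0 ≤ w i)
    (c α : ℝ) (hα : α ∈ Set.Icc (0 : ℝ) 1)
    (h : ENNReal.ofReal (1 - α) ≤ μ {ω | ∑ i, w i * (ε i ω - b i) ^ 2 ≤ c}) :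
    ENNReal.ofReal (1 - α) ≤ μ {ω | ∑ i, w i * (ε i ω) ^ 2 ≤ c} := by
  classical
  have hmarg : ∀ (i : Fin n) (s : ℝ),
      μ {ω | w i * (ε i ω - b i) ^ 2 ≤ s} ≤ μ {ω | w i * (ε i ω) ^ 2 ≤ s} :=
    fun i s => marginal' μ (hmeas i) (hF i) (hcont i) (hsym i) (hconc i) (b i) (hw i) s
  set S : ℕ → Ω → ℝ := fun k ω =>
    ∑ i : Fin n, if (i : ℕ) < k then w i * (ε i ω) ^ 2 else w i * (ε i ω - b i) ^ 2 with hSdef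
  have hS0 : {ω | ∑ i, w i * (ε i ω - b i) ^ 2 ≤ c} = {ω | S 0 ω ≤ c} := by
    simp [hSdef]
  have hSn : {ω | ∑ i, w i * (ε i ω) ^ 2 ≤ c} = {ω | S n ω ≤ c} := by
    have : ∀ ω, S n ω = ∑ i, w i * (ε i ω) ^ 2 := by
      intro ω
      simp only [hSdef]
      exact Finset.sum_congr rfl fun i _ => if_pos i.isLt
    ext ω
    simp only [Set.mem_setOf_eq, this]
  -- the single-coordinate step
  have hstep : ∀ k, k < n → μ {ω | S k ω ≤ c} ≤ μ {ω | S (k+1) ω ≤ c} := by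
    intro k hk
    set K : Fin n := ⟨k, hk⟩ with hK
    set E : Finset (Fin n) := Finset.univ.erase K with hE
    set f : ℝ → ℝ := fun x => w K * (x - b K) ^ 2 with hf
    set g : ℝ → ℝ := fun x => w K * x ^ 2 with hg
    set ρ : (E → ℝ) → ℝ := fun v =>
      ∑ i : E, (if ((i : Fin n) : ℕ) < k then w i * (v i) ^ 2
        else w i * (v i - b i) ^ 2) with hρdef
    have hρ : Measurable ρ := by
      apply Finset.measurable_sum
      intro i _
      by_cases hik : ((i : Fin n) : ℕ) < k
      · simp only [if_pos hik]
        exact (measurable_pi_apply i).pow_const 2 |>.const_mul _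
      · simp only [if_neg hik]
        exact ((measurable_pi_apply i).sub measurable_const).pow_const 2 |>.const_mul _
    set R : Ω → ℝ := fun ω => ρ (fun i : E => ε i ω) with hRdef
    have hRmeas : Measurable R :=
      hρ.comp (measurable_pi_lambda _ fun i => hmeas i)
    have hdisj : Disjoint ({K} : Finset (Fin n)) E := by
      simp [hE]
    have hIF := hindep.indepFun_finset {K} E hdisj hmeas
    have hind1 : IndepFun (ε K) R μ := by
      have hKmem : K ∈ ({K} : Finset (Fin n)) := Finset.mem_singleton_self K
      have := hIF.comp (φ := fun v : ({K} : Finset (Fin n)) → ℝ => v ⟨K, hKmem⟩)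
        (ψ := ρ) (measurable_pi_apply _ : Measurable fun v : ({K} : Finset (Fin n)) → ℝ => v ⟨K, hKmem⟩) hρ
      exact this
    -- decomposition of the sums
    have hRval : ∀ ω, R ω =
        ∑ i ∈ E, (if (i : ℕ) < k then w i * (ε i ω) ^ 2
          else w i * (ε i ω - b i) ^ 2) := by
      intro ω
      simp only [hRdef, hρdef]
      rw [Finset.univ_eq_attach]
      exact Finset.sum_attach E (fun i =>
        if (i : ℕ) < k then w i * (ε i ω) ^ 2 else w i * (ε i ω - b i) ^ 2)
    have hSk : ∀ ω, S k ω = f (ε K ω) + R ω := by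
      intro ω
      simp only [hSdef, hRval]
      rw [← Finset.add_sum_erase Finset.univ _ (Finset.mem_univ K)]
      congr 1
      simp [hf, hK]
    have hSk1 : ∀ ω, S (k+1) ω = g (ε K ω) + R ω := by
      intro ω
      simp only [hSdef, hRval]
      rw [← Finset.add_sum_erase Finset.univ _ (Finset.mem_univ K)]
      congr 1
      · simp [hg, hK]
      · apply Finset.sum_congr rfl
        intro i hi
        have hiK : i ≠ K := (Finset.mem_erase.mp hi).1
        have hik : (i : ℕ) ≠ k := by
          intro hcontra
          exact hiK (Fin.ext (by simp [hK, hcontra]))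
        have : ((i : ℕ) < k + 1) ↔ ((i : ℕ) < k) := by omega
        simp only [this]
    have hfmeas : Measurable f :=
      ((measurable_id.sub measurable_const).pow_const 2).const_mul _
    have hgmeas : Measurable g := (measurable_id.pow_const 2).const_mul _
    have hdom : ∀ s : ℝ, μ {ω | f (ε K ω) ≤ s} ≤ μ {ω | g (ε K ω) ≤ s} :=
      fun s => hmarg K s
    have hmain := step_indep μ (hmeas K) hRmeas hind1 hfmeas hgmeas hdom c
    have e1 : {ω | S k ω ≤ c} = {ω | f (ε K ω) + R ω ≤ c} :=
      Set.ext fun ω => by rw [Set.mem_setOf_eq, Set.mem_setOf_eq, hSk ω]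
    have e2 : {ω | S (k+1) ω ≤ c} = {ω | g (ε K ω) + R ω ≤ c} :=
      Set.ext fun ω => by rw [Set.mem_setOf_eq, Set.mem_setOf_eq, hSk1 ω]
    rw [e1, e2]
    exact hmain
  have hchain : ∀ k, μ {ω | S 0 ω ≤ c} ≤ μ {ω | S k ω ≤ c} := by
    intro k
    induction k with
    | zero => exact le_rfl
    | succ k ih =>
      rcases lt_or_ge k n with hk | hk
      · exact ih.trans (hstep k hk)
      · have : S (k+1) = S k := by
          funext ω
          simp only [hSdef]
          apply Finset.sum_congr rfl
          intro i _
          have h1 : (i : ℕ) < k := lt_of_lt_of_le i.isLt hk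
          simp [h1, Nat.lt_succ_of_lt h1]
        rw [this]
        exact ih
  calc ENNReal.ofReal (1 - α) ≤ μ {ω | ∑ i, w i * (ε i ω - b i) ^ 2 ≤ c} := h
    _ = μ {ω | S 0 ω ≤ c} := by rw [hS0]
    _ ≤ μ {ω | S n ω ≤ c} := hchain n
    _ = μ {ω | ∑ i, w i * (ε i ω) ^ 2 ≤ c} := by rw [hSn]
end

section
/- Let (Ω, P) be a probability space, K and I finite index sets, and ε : Ω → K → ℝ with ε₁, …, ε_K mutually independent, where each εₖ has a continuous cumulative distribution function Fₖ : ℝ → ℝ that is monotone nondecreasing, satisfies Fₖ(x) + Fₖ(−x) = 1 for all x ∈ ℝ, is convex on (−∞, 0] and concave on [0, ∞). Let Θ be a type, f : Θ → K → ℝ, p : Θ → I → ℝ, σ : K → ℝ and τ : I → ℝ with σₖ > 0, τᵢ > 0, and θ^true, θ* ∈ Θ. Define the random data x̃ₖ(ω) = f(θ^true)ₖ + εₖ(ω), the fit error z_fit(θ, ω) = ∑ₖ ((f(θ)ₖ − x̃ₖ(ω))/σₖ)², and the deviation z_dev(θ¹, θ²) = ∑ᵢ ((p(θ¹)ᵢ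 − p(θ²)ᵢ)/τᵢ)². Let z_u ∈ ℝ and α ∈ [0, 1], and assume P(z_fit(θ*, ·) ≤ z_u) ≥ 1 − α. Then with probability at least 1 − α over ω, the following holds: for every pair (θ̄¹, θ̄²) with z_fit(θ̄¹, ω) ≤ z_u and z_fit(θ̄², ω) ≤ z_u that maximizes z_dev among all such feasible pairs, one has z_dev(θ^true, θ̄¹) ≤ z_dev(θ̄¹, θ̄²) and z_dev(θ^true, θ̄²) ≤ z_dev(θ̄¹, θ̄²). -/
open MeasureTheory ProbabilityTheory Filter Finset

lemma pdaux_concave_slide {F : ℝ → ℝ} (hconc : ConcaveOn ℝ (Set.Ici 0) F)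
    {x y c : ℝ} (hx : 0 ≤ x) (hxy : x ≤ y) (hc : 0 ≤ c) :
    F (y + c) - F y ≤ F (x + c) - F x := by
  rcases eq_or_lt_of_le (show (0:ℝ) ≤ y - x + c by linarith) with h | h
  · have hc0 : c = 0 := by linarith
    have hyx : y = x := by linarith
    subst hc0; subst hyx; simp
  · have hd0 : (0:ℝ) < y - x + c := h
    set a := c / (y - x + c) with ha
    have ha0 : 0 ≤ a := div_nonneg hc hd0.le
    have ha1 : a ≤ 1 := (div_le_one hd0).mpr (by linarith)
    have key1 : a * x + (1 - a) * (y + c) = y := by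
      rw [ha]; field_simp; ring
    have key2 : (1 - a) * x + a * (y + c) = x + c := by
      rw [ha]; field_simp; ring
    have hxmem : x ∈ Set.Ici (0:ℝ) := hx
    have hymem : y + c ∈ Set.Ici (0:ℝ) := by simp only [Set.mem_Ici]; linarith
    have h1 : a • F x + (1 - a) • F (y + c) ≤ F (a • x + (1 - a) • (y + c)) :=
      hconc.2 hxmem hymem ha0 (by linarith) (by ring)
    have h2 : (1 - a) • F x + a • F (y + c) ≤ F ((1 - a) • x + a • (y + c)) :=
      hconc.2 hxmem hymem (by linarith) ha0 (by ring)
    rw [smul_eq_mul, smul_eq_mul, smul_eq_mul, smul_eq_mul, key1] at h1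
    rw [smul_eq_mul, smul_eq_mul, smul_eq_mul, smul_eq_mul, key2] at h2
    linarith

lemma pdaux_shift_interval_le {F : ℝ → ℝ} (hsym : ∀ x, F x + F (-x) = 1)
    (hconc : ConcaveOn ℝ (Set.Ici 0) F) (δ r : ℝ) (hr : 0 ≤ r) :
    F (δ + r) - F (δ - r) ≤ F r - F (-r) := by
  have hF0 : F 0 = 1/2 := by have := hsym 0; rw [neg_zero] at this; linarith
  have hFr : F (-r) = 1 - F r := by have := hsym r; linarith
  have main : ∀ d : ℝ, 0 ≤ d → F (d + r) - F (d - r) ≤ F r - F (-r) := by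
    intro d hd
    rcases le_or_gt d r with hdr | hdr
    · have h1 : F (d - r) = 1 - F (r - d) := by
        have := hsym (d - r); rw [show -(d-r) = r - d from by ring] at this; linarith
      have h2 : (1/2 : ℝ) • F (r + d) + (1/2 : ℝ) • F (r - d) ≤
          F ((1/2 : ℝ) • (r + d) + (1/2 : ℝ) • (r - d)) :=
        hconc.2 (show r + d ∈ Set.Ici (0:ℝ) from by simp only [Set.mem_Ici]; linarith)
          (show r - d ∈ Set.Ici (0:ℝ) from by simp only [Set.mem_Ici]; linarith)
          (by norm_num) (by norm_num) (by norm_num)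
      rw [smul_eq_mul, smul_eq_mul, smul_eq_mul, smul_eq_mul,
        show (1/2:ℝ)*(r+d) + (1/2)*(r-d) = r from by ring] at h2
      rw [show d + r = r + d from by ring, h1, hFr]
      linarith
    · have h3 : F ((d - r) + 2*r) - F (d - r) ≤ F (0 + 2*r) - F 0 :=
        pdaux_concave_slide hconc le_rfl (by linarith) (by linarith)
      have h4 : (1/2 : ℝ) • F 0 + (1/2 : ℝ) • F (2*r) ≤
          F ((1/2 : ℝ) • (0:ℝ) + (1/2 : ℝ) • (2*r)) :=
        hconc.2 (show (0:ℝ) ∈ Set.Ici (0:ℝ) from Set.self_mem_Ici)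
          (show 2*r ∈ Set.Ici (0:ℝ) from by simp only [Set.mem_Ici]; linarith)
          (by norm_num) (by norm_num) (by norm_num)
      rw [smul_eq_mul, smul_eq_mul, smul_eq_mul, smul_eq_mul,
        show (1/2:ℝ)*0 + (1/2)*(2*r) = r from by ring] at h4
      rw [show (d - r) + 2*r = d + r from by ring, zero_add] at h3
      rw [hFr]
      linarith
  rcases le_or_gt 0 δ with h | h
  · exact main δ h
  · have e1 : F (δ + r) = 1 - F (-δ - r) := by
      have := hsym (δ + r); rw [show -(δ+r) = -δ - r from by ring] at this; linarith
    have e2 : F (δ - r) = 1 - F (-δ + r) := by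
      have := hsym (δ - r); rw [show -(δ-r) = -δ + r from by ring] at this; linarith
    have h5 := main (-δ) (by linarith)
    rw [show -δ + r = -δ + r from rfl] at h5
    rw [e1, e2]
    have : F (-δ + r) - F (-δ - r) ≤ F r - F (-r) := by
      rw [show -δ - r = -δ - r from rfl]; exact h5
    linarith

lemma pdaux_measure_Icc_le {ν : Measure ℝ} [IsProbabilityMeasure ν] {F : ℝ → ℝ}
    (hIic : ∀ x, ν (Set.Iic x) = ENNReal.ofReal (F x)) (hcont : Continuous F)
    (hFnn : ∀ x, 0 ≤ F x) (a b : ℝ) :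
    ν (Set.Icc a b) ≤ ENNReal.ofReal (F b - F a) := by
  rcases lt_or_ge b a with hab | hab
  · rw [Set.Icc_eq_empty (by exact fun h => absurd h (not_le.mpr hab))]
    simp
  · have key : ∀ n : ℕ, ν (Set.Icc a b) ≤ ENNReal.ofReal (F b - F (a - 1/((n:ℝ)+1))) := by
      intro n
      have hpos : (0:ℝ) < 1/((n:ℝ)+1) := by positivity
      have hsub : Set.Icc a b ⊆ Set.Iic b \ Set.Iic (a - 1/((n:ℝ)+1)) := by
        intro t ht
        simp only [Set.mem_Icc] at ht
        simp only [Set.mem_diff, Set.mem_Iic, not_le]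
        exact ⟨ht.2, by linarith [ht.1]⟩
      have hdiff : ν (Set.Iic b \ Set.Iic (a - 1/((n:ℝ)+1)))
          = ν (Set.Iic b) - ν (Set.Iic (a - 1/((n:ℝ)+1))) :=
        measure_diff (Set.Iic_subset_Iic.mpr (by linarith)) measurableSet_Iic.nullMeasurableSet
          (measure_ne_top ν _)
      calc ν (Set.Icc a b) ≤ ν (Set.Iic b \ Set.Iic (a - 1/((n:ℝ)+1))) := measure_mono hsub
        _ = ENNReal.ofReal (F b) - ENNReal.ofReal (F (a - 1/((n:ℝ)+1))) := by
            rw [hdiff, hIic, hIic]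
        _ = ENNReal.ofReal (F b - F (a - 1/((n:ℝ)+1))) :=
            (ENNReal.ofReal_sub _ (hFnn _)).symm
    have hlim : Tendsto (fun n : ℕ => ENNReal.ofReal (F b - F (a - 1/((n:ℝ)+1)))) atTop
        (nhds (ENNReal.ofReal (F b - F a))) := by
      apply ENNReal.tendsto_ofReal
      have h1 : Tendsto (fun n : ℕ => a - 1/((n:ℝ)+1)) atTop (nhds a) := by
        have := tendsto_one_div_add_atTop_nhds_zero_nat (𝕜 := ℝ)
        simpa using tendsto_const_nhds.sub this
      have h2 : Tendsto (fun n : ℕ => F (a - 1/((n:ℝ)+1))) atTop (nhds (F a)) :=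
        ((hcont.tendsto a).comp h1)
      simpa using tendsto_const_nhds.sub h2
    exact ge_of_tendsto' hlim key

lemma pdaux_le_measure_Icc {ν : Measure ℝ} [IsProbabilityMeasure ν] {F : ℝ → ℝ}
    (hIic : ∀ x, ν (Set.Iic x) = ENNReal.ofReal (F x)) (hmono : Monotone F)
    (hFnn : ∀ x, 0 ≤ F x) (a b : ℝ) :
    ENNReal.ofReal (F b - F a) ≤ ν (Set.Icc a b) := by
  rcases le_or_gt a b with hab | hab
  · have hsub : Set.Iic b \ Set.Iic a ⊆ Set.Icc a b := by
      intro t ht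
      simp only [Set.mem_diff, Set.mem_Iic, not_le] at ht
      exact ⟨ht.2.le, ht.1⟩
    calc ENNReal.ofReal (F b - F a) = ENNReal.ofReal (F b) - ENNReal.ofReal (F a) :=
          ENNReal.ofReal_sub _ (hFnn a)
      _ = ν (Set.Iic b) - ν (Set.Iic a) := by rw [hIic, hIic]
      _ ≤ ν (Set.Iic b \ Set.Iic a) := le_measure_diff
      _ ≤ ν (Set.Icc a b) := measure_mono hsub
  · have : F b - F a ≤ 0 := by linarith [hmono hab.le]
    rw [ENNReal.ofReal_eq_zero.mpr this]
    exact zero_le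

lemma pdaux_one_dim {ν : Measure ℝ} [IsProbabilityMeasure ν] {F : ℝ → ℝ}
    (hIic : ∀ x, ν (Set.Iic x) = ENNReal.ofReal (F x)) (hcont : Continuous F)
    (hmono : Monotone F) (hFnn : ∀ x, 0 ≤ F x) (hsym : ∀ x, F x + F (-x) = 1)
    (hconc : ConcaveOn ℝ (Set.Ici 0) F) {σ : ℝ} (hσ : 0 < σ) (d c : ℝ) :
    ν {t : ℝ | ((d - t)/σ)^2 ≤ c} ≤ ν {t : ℝ | ((0 - t)/σ)^2 ≤ c} := by
  rcases lt_or_ge c 0 with hc | hc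
  · have he : {t : ℝ | ((d - t)/σ)^2 ≤ c} = ∅ := by
      rw [Set.eq_empty_iff_forall_notMem]
      intro t ht
      simp only [Set.mem_setOf_eq] at ht
      nlinarith [sq_nonneg ((d - t)/σ)]
    rw [he]; simp
  · set r := σ * Real.sqrt c with hrdef
    have hr : 0 ≤ r := mul_nonneg hσ.le (Real.sqrt_nonneg c)
    have hr2 : r^2 = c * σ^2 := by
      rw [hrdef, mul_pow, Real.sq_sqrt hc]; ring
    have hset : ∀ d' : ℝ, {t : ℝ | ((d' - t)/σ)^2 ≤ c} = Set.Icc (d' - r) (d' + r) := by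
      intro d'; ext t
      simp only [Set.mem_setOf_eq, Set.mem_Icc]
      rw [div_pow, div_le_iff₀ (by positivity : (0:ℝ) < σ^2)]
      constructor
      · intro h
        have h2 : (d' - t)^2 ≤ r^2 := by linarith
        have habs : |d' - t| ≤ r := by
          nlinarith [sq_abs (d' - t), abs_nonneg (d' - t)]
        have := abs_le.mp habs
        exact ⟨by linarith [this.1], by linarith [this.2]⟩
      · rintro ⟨h1, h2⟩
        nlinarith
    rw [hset d, hset 0]
    calc ν (Set.Icc (d - r) (d + r)) ≤ ENNReal.ofReal (F (d + r) - F (d - r)) :=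
          pdaux_measure_Icc_le hIic hcont hFnn _ _
      _ ≤ ENNReal.ofReal (F r - F (-r)) :=
          ENNReal.ofReal_le_ofReal (pdaux_shift_interval_le hsym hconc d r hr)
      _ ≤ ν (Set.Icc (-r) r) := pdaux_le_measure_Icc hIic hmono hFnn _ _
      _ = ν (Set.Icc (0 - r) (0 + r)) := by rw [zero_sub, zero_add]

lemma pdaux_pi_step {K : Type*} [Fintype K] [DecidableEq K]
    (ν : K → Measure ℝ) [∀ k, IsProbabilityMeasure (ν k)]
    (F : K → ℝ → ℝ) (hIic : ∀ k x, ν k (Set.Iic x) = ENNReal.ofReal (F k x))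
    (hcont : ∀ k, Continuous (F k)) (hmono : ∀ k, Monotone (F k))
    (hFnn : ∀ k x, 0 ≤ F k x) (hsym : ∀ k x, F k x + F k (-x) = 1)
    (hconc : ∀ k, ConcaveOn ℝ (Set.Ici 0) (F k))
    (σ : K → ℝ) (hσ : ∀ k, 0 < σ k) (zu : ℝ) (δ : K → ℝ) (j : K) :
    Measure.pi ν {x : K → ℝ | ∑ k, ((δ k - x k)/σ k)^2 ≤ zu} ≤
      Measure.pi ν {x : K → ℝ | ∑ k, ((Function.update δ j 0 k - x k)/σ k)^2 ≤ zu} := by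
  have hmeasfun : ∀ d : K → ℝ, Measurable fun x : K → ℝ => ∑ k, ((d k - x k)/σ k)^2 :=
    fun d => Finset.measurable_sum _ fun k _ =>
      (by fun_prop)
  have hA : ∀ d : K → ℝ, MeasurableSet {x : K → ℝ | ∑ k, ((d k - x k)/σ k)^2 ≤ zu} :=
    fun d => measurableSet_le (hmeasfun d) measurable_const
  have hInd : ∀ d : K → ℝ,
      Measurable (Set.indicator {x : K → ℝ | ∑ k, ((d k - x k)/σ k)^2 ≤ zu}
        (1 : (K → ℝ) → ENNReal)) :=
    fun d => measurable_one.indicator (hA d)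
  have key : ∀ (d : K → ℝ) (x : K → ℝ),
      (∫⁻ t, Set.indicator {y : K → ℝ | ∑ k, ((d k - y k)/σ k)^2 ≤ zu}
          (1 : (K → ℝ) → ENNReal) (Function.update x j t) ∂ν j)
        = ν j {t : ℝ | ((d j - t)/σ j)^2 ≤
            zu - ∑ k ∈ Finset.univ.erase j, ((d k - x k)/σ k)^2} := by
    intro d x
    have hsum : ∀ t : ℝ, ∑ k, ((d k - Function.update x j t k)/σ k)^2
        = ((d j - t)/σ j)^2 + ∑ k ∈ Finset.univ.erase j, ((d k - x k)/σ k)^2 := by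
      intro t
      rw [← Finset.add_sum_erase _ _ (Finset.mem_univ j), Function.update_self]
      congr 1
      exact Finset.sum_congr rfl fun k hk => by
        rw [Function.update_of_ne (Finset.ne_of_mem_erase hk)]
    have hset : ∀ t : ℝ,
        (Function.update x j t ∈ {y : K → ℝ | ∑ k, ((d k - y k)/σ k)^2 ≤ zu}) ↔
        t ∈ {t : ℝ | ((d j - t)/σ j)^2 ≤
            zu - ∑ k ∈ Finset.univ.erase j, ((d k - x k)/σ k)^2} := by
      intro t
      simp only [Set.mem_setOf_eq, hsum t]
      constructor <;> intro h <;> linarith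
    have hS : MeasurableSet {t : ℝ | ((d j - t)/σ j)^2 ≤
        zu - ∑ k ∈ Finset.univ.erase j, ((d k - x k)/σ k)^2} :=
      measurableSet_le (((measurable_const.sub measurable_id).div_const (σ j)).pow_const 2)
        measurable_const
    rw [← lintegral_indicator_one hS]
    apply lintegral_congr
    intro t
    by_cases h : t ∈ {t : ℝ | ((d j - t)/σ j)^2 ≤
        zu - ∑ k ∈ Finset.univ.erase j, ((d k - x k)/σ k)^2}
    · rw [Set.indicator_of_mem ((hset t).mpr h), Set.indicator_of_mem h]; rfl
    · rw [Set.indicator_of_notMem (fun hmem => h ((hset t).mp hmem)),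
        Set.indicator_of_notMem h]
  have hcompare : ∀ x : K → ℝ,
      (∫⁻ t, Set.indicator {y : K → ℝ | ∑ k, ((δ k - y k)/σ k)^2 ≤ zu}
          (1 : (K → ℝ) → ENNReal) (Function.update x j t) ∂ν j) ≤
      (∫⁻ t, Set.indicator {y : K → ℝ | ∑ k, ((Function.update δ j 0 k - y k)/σ k)^2 ≤ zu}
          (1 : (K → ℝ) → ENNReal) (Function.update x j t) ∂ν j) := by
    intro x
    rw [key δ x, key (Function.update δ j 0) x]
    have herase : ∑ k ∈ Finset.univ.erase j, ((Function.update δ j 0 k - x k)/σ k)^2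
        = ∑ k ∈ Finset.univ.erase j, ((δ k - x k)/σ k)^2 :=
      Finset.sum_congr rfl fun k hk => by
        rw [Function.update_of_ne (Finset.ne_of_mem_erase hk)]
    rw [herase, Function.update_self]
    exact pdaux_one_dim (hIic j) (hcont j) (hmono j) (hFnn j) (hsym j) (hconc j) (hσ j) _ _
  calc Measure.pi ν {x : K → ℝ | ∑ k, ((δ k - x k)/σ k)^2 ≤ zu}
      = ∫⁻ x, Set.indicator {x : K → ℝ | ∑ k, ((δ k - x k)/σ k)^2 ≤ zu}
          (1 : (K → ℝ) → ENNReal) x ∂Measure.pi ν := (lintegral_indicator_one (hA δ)).symm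
    _ = (∫⋯∫⁻_Finset.univ, Set.indicator {x : K → ℝ | ∑ k, ((δ k - x k)/σ k)^2 ≤ zu}
          (1 : (K → ℝ) → ENNReal) ∂ν) (fun _ => 0) := lintegral_eq_lmarginal_univ _
    _ = (∫⋯∫⁻_(Finset.univ.erase j), (fun x => ∫⁻ t,
          Set.indicator {y : K → ℝ | ∑ k, ((δ k - y k)/σ k)^2 ≤ zu}
            (1 : (K → ℝ) → ENNReal) (Function.update x j t) ∂ν j) ∂ν) (fun _ => 0) := by
        rw [← lmarginal_erase' _ (hInd δ) (Finset.mem_univ j)]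
    _ ≤ (∫⋯∫⁻_(Finset.univ.erase j), (fun x => ∫⁻ t,
          Set.indicator {y : K → ℝ | ∑ k, ((Function.update δ j 0 k - y k)/σ k)^2 ≤ zu}
            (1 : (K → ℝ) → ENNReal) (Function.update x j t) ∂ν j) ∂ν) (fun _ => 0) :=
        lmarginal_mono (fun x => hcompare x) _
    _ = (∫⋯∫⁻_Finset.univ, Set.indicator
          {x : K → ℝ | ∑ k, ((Function.update δ j 0 k - x k)/σ k)^2 ≤ zu}
          (1 : (K → ℝ) → ENNReal) ∂ν) (fun _ => 0) := by
        rw [← lmarginal_erase' _ (hInd (Function.update δ j 0)) (Finset.mem_univ j)]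
    _ = ∫⁻ x, Set.indicator {x : K → ℝ | ∑ k, ((Function.update δ j 0 k - x k)/σ k)^2 ≤ zu}
          (1 : (K → ℝ) → ENNReal) x ∂Measure.pi ν := (lintegral_eq_lmarginal_univ _).symm
    _ = Measure.pi ν {x : K → ℝ | ∑ k, ((Function.update δ j 0 k - x k)/σ k)^2 ≤ zu} :=
        lintegral_indicator_one (hA _)

lemma pdaux_pi_all {K : Type*} [Fintype K] [DecidableEq K]
    (ν : K → Measure ℝ) [∀ k, IsProbabilityMeasure (ν k)]
    (F : K → ℝ → ℝ) (hIic : ∀ k x, ν k (Set.Iic x) = ENNReal.ofReal (F k x))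
    (hcont : ∀ k, Continuous (F k)) (hmono : ∀ k, Monotone (F k))
    (hFnn : ∀ k x, 0 ≤ F k x) (hsym : ∀ k x, F k x + F k (-x) = 1)
    (hconc : ∀ k, ConcaveOn ℝ (Set.Ici 0) (F k))
    (σ : K → ℝ) (hσ : ∀ k, 0 < σ k) (zu : ℝ) (δ : K → ℝ) :
    Measure.pi ν {x : K → ℝ | ∑ k, ((δ k - x k)/σ k)^2 ≤ zu} ≤
      Measure.pi ν {x : K → ℝ | ∑ k, ((0 - x k)/σ k)^2 ≤ zu} := by
  have main : ∀ s : Finset K,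
      Measure.pi ν {x : K → ℝ | ∑ k, ((δ k - x k)/σ k)^2 ≤ zu} ≤
      Measure.pi ν {x : K → ℝ | ∑ k, (((if k ∈ s then 0 else δ k) - x k)/σ k)^2 ≤ zu} := by
    intro s
    induction s using Finset.induction_on with
    | empty => simp
    | @insert j s hj ih =>
        have hupd : (fun k => if k ∈ insert j s then 0 else δ k)
            = Function.update (fun k => if k ∈ s then 0 else δ k) j 0 := by
          funext k
          by_cases hk : k = j
          · subst hk; simp [Function.update_self]
          · simp [Function.update_of_ne hk, Finset.mem_insert, hk]
        have step := pdaux_pi_step ν F hIic hcont hmono hFnn hsym hconc σ hσ zu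
          (fun k => if k ∈ s then 0 else δ k) j
        refine le_trans ih (le_trans step (le_of_eq ?_))
        congr 1
        ext x
        simp only [Set.mem_setOf_eq,
          show ∀ k, Function.update (fun k => if k ∈ s then 0 else δ k) j 0 k
            = (if k ∈ insert j s then 0 else δ k) from fun k => congrFun hupd.symm k]
  have := main Finset.univ
  simpa using this

/-- Theorem 1 of the paper: the observed data equal the output of a true model
`θtrue` plus independent symmetric unimodal noises; `θstar` is a fixed
best-fit model whose fit error is below `zu` with probability at least
`1 - α`. Then with probability at least `1 - α`, for every pair of prediction
deviation models (feasible pairs maximizing the prediction deviation), the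
true model's deviation from each of them is bounded by the prediction
deviation itself. -/
theorem prediction_deviation_bounds_true_model
    {Ω Θ K I : Type*} [MeasurableSpace Ω] [Fintype K] [Fintype I]
    (μ : Measure Ω) [IsProbabilityMeasure μ]
    (ε : Ω → K → ℝ) (hmeas : ∀ k, Measurable (fun ω => ε ω k))
    (hindep : iIndepFun (fun k ω => ε ω k) μ)
    (F : K → ℝ → ℝ)
    (hF : ∀ k, ∀ x : ℝ, (μ {ω | ε ω k ≤ x}).toReal = F k x)
    (hcont : ∀ k, Continuous (F k)) (hmono : ∀ k, Monotone (F k))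
    (hsym : ∀ k, ∀ x : ℝ, F k x + F k (-x) = 1)
    (hconv : ∀ k, ConvexOn ℝ (Set.Iic (0 : ℝ)) (F k))
    (hconc : ∀ k, ConcaveOn ℝ (Set.Ici (0 : ℝ)) (F k))
    (f : Θ → K → ℝ) (p : Θ → I → ℝ)
    (σ : K → ℝ) (τ : I → ℝ) (hσ : ∀ k, 0 < σ k) (hτ : ∀ i, 0 < τ i)
    (θtrue θstar : Θ) (zu α : ℝ) (hα : α ∈ Set.Icc (0 : ℝ) 1)
    (hci : ENNReal.ofReal (1 - α) ≤
      μ {ω | ∑ k, ((f θstar k - (f θtrue k + ε ω k)) / σ k) ^ 2 ≤ zu}) :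
    ENNReal.ofReal (1 - α) ≤
      μ {ω | ∀ θb1 θb2 : Θ,
        (∑ k, ((f θb1 k - (f θtrue k + ε ω k)) / σ k) ^ 2 ≤ zu) →
        (∑ k, ((f θb2 k - (f θtrue k + ε ω k)) / σ k) ^ 2 ≤ zu) →
        (∀ θ1 θ2 : Θ,
          (∑ k, ((f θ1 k - (f θtrue k + ε ω k)) / σ k) ^ 2 ≤ zu) →
          (∑ k, ((f θ2 k - (f θtrue k + ε ω k)) / σ k) ^ 2 ≤ zu) →
          ∑ i, ((p θ1 i - p θ2 i) / τ i) ^ 2 ≤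
            ∑ i, ((p θb1 i - p θb2 i) / τ i) ^ 2) →
        ((∑ i, ((p θtrue i - p θb1 i) / τ i) ^ 2 ≤
            ∑ i, ((p θb1 i - p θb2 i) / τ i) ^ 2) ∧
         (∑ i, ((p θtrue i - p θb2 i) / τ i) ^ 2 ≤
            ∑ i, ((p θb1 i - p θb2 i) / τ i) ^ 2))} := by
  classical
  set ν : K → Measure ℝ := fun k => μ.map (fun ω => ε ω k) with hν
  haveI : ∀ k, IsProbabilityMeasure (ν k) := fun k =>
    Measure.isProbabilityMeasure_map (hmeas k).aemeasurable
  have hIic : ∀ k x, ν k (Set.Iic x) = ENNReal.ofReal (F k x) := by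
    intro k x
    rw [hν]
    simp only
    rw [Measure.map_apply (hmeas k) measurableSet_Iic]
    rw [show (fun ω => ε ω k) ⁻¹' Set.Iic x = {ω | ε ω k ≤ x} from rfl,
      ← hF k x, ENNReal.ofReal_toReal (measure_ne_top μ _)]
  have hFnn : ∀ k x, 0 ≤ F k x := fun k x => (hF k x) ▸ ENNReal.toReal_nonneg
  have hεmeas : Measurable ε := measurable_pi_iff.mpr hmeas
  have hpi : μ.map ε = Measure.pi ν := by
    refine (Measure.pi_eq fun s hs => ?_).symm
    rw [Measure.map_apply hεmeas (MeasurableSet.univ_pi hs)]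
    have hpre : ε ⁻¹' Set.pi Set.univ s = ⋂ k ∈ Finset.univ, (fun ω => ε ω k) ⁻¹' s k := by
      ext ω; simp [Set.mem_pi]
    rw [hpre, hindep.measure_inter_preimage_eq_mul Finset.univ (fun i _ => hs i)]
    exact Finset.prod_congr rfl fun k _ => (Measure.map_apply (hmeas k) (hs k)).symm
  have hmeasA : ∀ d : K → ℝ, MeasurableSet {x : K → ℝ | ∑ k, ((d k - x k)/σ k)^2 ≤ zu} :=
    fun d => measurableSet_le (Finset.measurable_sum _ fun k _ =>
      (by fun_prop))
      measurable_const
  have h1 : μ {ω | ∑ k, ((f θstar k - (f θtrue k + ε ω k)) / σ k) ^ 2 ≤ zu}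
      = Measure.pi ν {x : K → ℝ | ∑ k, (((f θstar k - f θtrue k) - x k)/σ k)^2 ≤ zu} := by
    rw [← hpi, Measure.map_apply hεmeas (hmeasA _)]
    congr 1
    ext ω
    simp only [Set.mem_preimage, Set.mem_setOf_eq]
    rw [show ∑ k, (((f θstar k - f θtrue k) - ε ω k)/σ k)^2
        = ∑ k, ((f θstar k - (f θtrue k + ε ω k)) / σ k) ^ 2 from
      Finset.sum_congr rfl fun k _ => by ring_nf]
  have h2 : μ {ω | ∑ k, ((f θtrue k - (f θtrue k + ε ω k)) / σ k) ^ 2 ≤ zu}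
      = Measure.pi ν {x : K → ℝ | ∑ k, (((0:ℝ) - x k)/σ k)^2 ≤ zu} := by
    rw [← hpi, Measure.map_apply hεmeas (hmeasA (fun _ => 0))]
    congr 1
    ext ω
    simp only [Set.mem_preimage, Set.mem_setOf_eq]
    rw [show ∑ k, (((0:ℝ) - ε ω k)/σ k)^2
        = ∑ k, ((f θtrue k - (f θtrue k + ε ω k)) / σ k) ^ 2 from
      Finset.sum_congr rfl fun k _ => by ring_nf]
  have h3 := pdaux_pi_all ν F hIic hcont hmono hFnn (fun k x => hsym k x) hconc σ hσ zu
    (fun k => f θstar k - f θtrue k)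
  have hsub : {ω | ∑ k, ((f θtrue k - (f θtrue k + ε ω k)) / σ k) ^ 2 ≤ zu} ⊆
      {ω | ∀ θb1 θb2 : Θ,
        (∑ k, ((f θb1 k - (f θtrue k + ε ω k)) / σ k) ^ 2 ≤ zu) →
        (∑ k, ((f θb2 k - (f θtrue k + ε ω k)) / σ k) ^ 2 ≤ zu) →
        (∀ θ1 θ2 : Θ,
          (∑ k, ((f θ1 k - (f θtrue k + ε ω k)) / σ k) ^ 2 ≤ zu) →
          (∑ k, ((f θ2 k - (f θtrue k + ε ω k)) / σ k) ^ 2 ≤ zu) →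
          ∑ i, ((p θ1 i - p θ2 i) / τ i) ^ 2 ≤
            ∑ i, ((p θb1 i - p θb2 i) / τ i) ^ 2) →
        ((∑ i, ((p θtrue i - p θb1 i) / τ i) ^ 2 ≤
            ∑ i, ((p θb1 i - p θb2 i) / τ i) ^ 2) ∧
         (∑ i, ((p θtrue i - p θb2 i) / τ i) ^ 2 ≤
            ∑ i, ((p θb1 i - p θb2 i) / τ i) ^ 2))} := by
    intro ω hω θb1 θb2 hf1 hf2 hmax
    exact ⟨hmax θtrue θb1 hω hf1, hmax θtrue θb2 hω hf2⟩
  calc ENNReal.ofReal (1 - α)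
      ≤ μ {ω | ∑ k, ((f θstar k - (f θtrue k + ε ω k)) / σ k) ^ 2 ≤ zu} := hci
    _ = Measure.pi ν {x : K → ℝ | ∑ k, (((f θstar k - f θtrue k) - x k)/σ k)^2 ≤ zu} := h1
    _ ≤ Measure.pi ν {x : K → ℝ | ∑ k, (((0:ℝ) - x k)/σ k)^2 ≤ zu} := h3
    _ = μ {ω | ∑ k, ((f θtrue k - (f θtrue k + ε ω k)) / σ k) ^ 2 ≤ zu} := h2.symm
    _ ≤ _ := measure_mono hsub
end
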